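/- arXiv:funct-an/9607001 — 4 statements merged into one kernel-verified Lean document; each statement's English description precedes it below -/
import Mathlib

section
/- Let G be a subgroup of GL(D,ℝ) acting on ℝ^D, τ : G → GL(N,𝕂) a representation, and B₁,…,B_D ∈ M_N(𝕂). Define the operator 𝒟_B f = Σⱼ Bⱼ ∂f/∂xⱼ + m·f on C^∞(ℝ^D, 𝕂^N) and the action (T_g f)(x) = τ(g) f(g⁻¹ x). Then 𝒟_B commutes with T_g for all g ∈ G if and only if Σₖ g_{jk} τ(g) B_k τ(g)⁻¹ = B_j for all j ∈ {1,…,D} and all g ∈ G. -/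
open Matrix

/-- The first-order covariant differential operator `𝒟_B f = Σⱼ Bⱼ ∂f/∂xⱼ + m f`
acting on smooth functions `ℝ^D → 𝕂^N`. -/
noncomputable def covOp {𝕂 : Type*} [RCLike 𝕂] {D N : ℕ}
    (B : Fin D → Matrix (Fin N) (Fin N) 𝕂) (m : ℝ)
    (f : (Fin D → ℝ) → (Fin N → 𝕂)) : (Fin D → ℝ) → (Fin N → 𝕂) :=
  fun x => (∑ j, (B j).mulVec (fderiv ℝ f x (Pi.single j 1))) + m • f x

/-- The action `(T_g f)(x) = τ(g) f(g⁻¹ x)`, given the matrix `τg` of `τ(g)` and the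
matrix `ginv` of `g⁻¹`. -/
def groupAct {𝕂 : Type*} [RCLike 𝕂] {D N : ℕ}
    (τg : Matrix (Fin N) (Fin N) 𝕂) (ginv : Matrix (Fin D) (Fin D) ℝ)
    (f : (Fin D → ℝ) → (Fin N → 𝕂)) : (Fin D → ℝ) → (Fin N → 𝕂) :=
  fun x => τg.mulVec (f (ginv.mulVec x))

section aux
variable {𝕂 : Type*} [RCLike 𝕂] {D N : ℕ}

noncomputable def mvR (A : Matrix (Fin D) (Fin D) ℝ) : (Fin D → ℝ) →L[ℝ] (Fin D → ℝ) :=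
  LinearMap.toContinuousLinearMap A.mulVecLin

noncomputable def mvK (M : Matrix (Fin N) (Fin N) 𝕂) : (Fin N → 𝕂) →L[ℝ] (Fin N → 𝕂) :=
  LinearMap.toContinuousLinearMap (M.mulVecLin.restrictScalars ℝ)

lemma mvR_apply (A : Matrix (Fin D) (Fin D) ℝ) (x) : mvR A x = A.mulVec x := rfl
lemma mvK_apply (M : Matrix (Fin N) (Fin N) 𝕂) (x) : mvK M x = M.mulVec x := rfl

lemma mulVec_sum' {ι : Type*} (s : Finset ι) (M : Matrix (Fin N) (Fin N) 𝕂)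
    (v : ι → Fin N → 𝕂) : M.mulVec (∑ i ∈ s, v i) = ∑ i ∈ s, M.mulVec (v i) := by
  classical
  induction s using Finset.induction with
  | empty => simp [Matrix.mulVec_zero]
  | insert _ _ h ih => simp [Finset.sum_insert h, Matrix.mulVec_add, ih]

lemma sum_mulVec' {ι : Type*} (s : Finset ι) (M : ι → Matrix (Fin N) (Fin N) 𝕂)
    (v : Fin N → 𝕂) : (∑ i ∈ s, M i).mulVec v = ∑ i ∈ s, (M i).mulVec v := by
  classical
  induction s using Finset.induction with
  | empty => simp [Matrix.mulVec_zero]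
  | insert _ _ h ih => simp [Finset.sum_insert h, Matrix.add_mulVec, ih]

lemma fderiv_groupAct (τg : Matrix (Fin N) (Fin N) 𝕂) (A : Matrix (Fin D) (Fin D) ℝ)
    (f : (Fin D → ℝ) → (Fin N → 𝕂)) (hf : ContDiff ℝ (⊤ : ℕ∞) f) (x v : Fin D → ℝ) :
    fderiv ℝ (groupAct τg A f) x v = τg.mulVec (fderiv ℝ f (A.mulVec x) (A.mulVec v)) := by
  have hdf : Differentiable ℝ f := hf.differentiable (by simp)
  have h1 : groupAct τg A f = (mvK τg) ∘ (f ∘ (mvR A)) := rfl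
  have h2 : fderiv ℝ (f ∘ (mvR A)) x = (fderiv ℝ f ((mvR A) x)).comp (mvR A) := by
    rw [fderiv_comp x (hdf _) (mvR A).differentiableAt, (mvR A).fderiv]
  have h3 : fderiv ℝ ((mvK τg) ∘ (f ∘ (mvR A))) x
      = (mvK τg).comp (fderiv ℝ (f ∘ (mvR A)) x) := by
    rw [fderiv_comp x ((mvK τg).differentiableAt)
      ((hdf.comp (mvR A).differentiable) x), (mvK τg).fderiv]
  rw [h1, h3, h2]
  rfl

lemma covOp_groupAct (B : Fin D → Matrix (Fin N) (Fin N) 𝕂) (m : ℝ)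
    (τg : Matrix (Fin N) (Fin N) 𝕂) (A : Matrix (Fin D) (Fin D) ℝ)
    (f : (Fin D → ℝ) → (Fin N → 𝕂)) (hf : ContDiff ℝ (⊤ : ℕ∞) f) (x : Fin D → ℝ) :
    covOp B m (groupAct τg A f) x
      = (∑ j, (B j).mulVec (τg.mulVec (fderiv ℝ f (A.mulVec x) (A.mulVec (Pi.single j 1)))))
        + m • τg.mulVec (f (A.mulVec x)) := by
  unfold covOp
  simp only [fderiv_groupAct τg A f hf x]
  rfl

/-- the key iff for a fixed pair of matrices -/
lemma main_iff (B : Fin D → Matrix (Fin N) (Fin N) 𝕂) (m : ℝ)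
    (T : Matrix (Fin N) (Fin N) 𝕂) (A : Matrix (Fin D) (Fin D) ℝ) :
    (∀ f : (Fin D → ℝ) → (Fin N → 𝕂), ContDiff ℝ (⊤ : ℕ∞) f →
        covOp B m (groupAct T A f) = groupAct T A (covOp B m f))
    ↔ (∀ k, ∑ j, A k j • (B j * T) = T * B k) := by
  constructor
  · intro H k
    -- test with linear functions
    have hv : ∀ v : Fin N → 𝕂,
        (∑ j, A k j • (B j * T)).mulVec v = (T * B k).mulVec v := by
      intro v
      set F : (Fin D → ℝ) →L[ℝ] (Fin N → 𝕂) :=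
        (ContinuousLinearMap.proj k : (Fin D → ℝ) →L[ℝ] ℝ).smulRight v with hF
      have hfd : ContDiff ℝ (⊤ : ℕ∞) (⇑F) := F.contDiff
      have := congrFun (H (⇑F) hfd) 0
      rw [covOp_groupAct B m T A _ hfd 0] at this
      simp only [F.fderiv] at this
      have hF0 : F (A.mulVec (0 : Fin D → ℝ)) = 0 := by
        simp [hF, Matrix.mulVec_zero]
      rw [Matrix.mulVec_zero] at this
      have hgact : groupAct T A (covOp B m (⇑F)) 0
          = T.mulVec ((∑ j, (B j).mulVec (fderiv ℝ (⇑F) (A.mulVec (0:Fin D → ℝ)) (Pi.single j 1)))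
              + m • F (A.mulVec (0:Fin D → ℝ))) := rfl
      rw [hgact, F.fderiv] at this
      simp only [hF, ContinuousLinearMap.smulRight_apply, ContinuousLinearMap.proj_apply,
        Matrix.mulVec_zero, Matrix.mulVec_single_one, Matrix.col_apply, mul_one, Pi.zero_apply, zero_smul,
        smul_zero, add_zero, Matrix.mulVec_zero, Pi.single_apply] at this
      rw [sum_mulVec']
      simp only [Matrix.smul_mulVec, ← Matrix.mulVec_mulVec]
      simp only [ite_smul, one_smul, zero_smul, Matrix.mulVec_smul, apply_ite,
        Matrix.mulVec_zero, Finset.sum_ite_eq, Finset.mem_univ, if_true] at this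
      exact this
    have hinj : Function.Injective fun M : Matrix (Fin N) (Fin N) 𝕂 => M.mulVec := by
      intro M M' h
      ext i l
      have := congrFun (congrFun h (Pi.single l 1)) i
      simpa [Matrix.mulVec_single] using this
    exact hinj (funext hv)
  · intro H f hf
    funext x
    rw [covOp_groupAct B m T A f hf x]
    have hrhs : groupAct T A (covOp B m f) x
        = T.mulVec ((∑ j, (B j).mulVec (fderiv ℝ f (A.mulVec x) (Pi.single j 1)))
            + m • f (A.mulVec x)) := rfl
    rw [hrhs, Matrix.mulVec_add, Matrix.mulVec_smul]
    congr 1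
    -- expand directional derivative
    have hexp : ∀ j, A.mulVec (Pi.single j 1) = ∑ l, A l j • (Pi.single l 1 : Fin D → ℝ) := by
      intro j
      rw [Matrix.mulVec_single_one]
      funext i
      simp [Pi.single_apply, Finset.sum_apply, mul_comm]
    calc ∑ j, (B j).mulVec (T.mulVec (fderiv ℝ f (A.mulVec x) (A.mulVec (Pi.single j 1))))
        = ∑ j, ∑ l, A l j • ((B j * T).mulVec (fderiv ℝ f (A.mulVec x) (Pi.single l 1))) := by
          refine Finset.sum_congr rfl fun j _ => ?_
          rw [hexp j, map_sum]
          simp only [_root_.map_smul]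
          simp only [mulVec_sum', Matrix.mulVec_smul, Matrix.mulVec_mulVec]
      _ = ∑ l, (∑ j, A l j • (B j * T)).mulVec (fderiv ℝ f (A.mulVec x) (Pi.single l 1)) := by
          rw [Finset.sum_comm]
          refine Finset.sum_congr rfl fun l _ => ?_
          rw [sum_mulVec']
          simp [Matrix.smul_mulVec]
      _ = ∑ l, (T * B l).mulVec (fderiv ℝ f (A.mulVec x) (Pi.single l 1)) := by
          simp only [H]
      _ = T.mulVec (∑ j, (B j).mulVec (fderiv ℝ f (A.mulVec x) (Pi.single j 1))) := by
          rw [mulVec_sum']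
          simp only [Matrix.mulVec_mulVec]

lemma cond_iff (B : Fin D → Matrix (Fin N) (Fin N) 𝕂)
    (T T' : Matrix (Fin N) (Fin N) 𝕂) (hT : T * T' = 1) (hT' : T' * T = 1)
    (g A : Matrix (Fin D) (Fin D) ℝ) (hgA : g * A = 1) (hAg : A * g = 1) :
    (∀ k, ∑ j, A k j • (B j * T) = T * B k) ↔ (∀ j, ∑ k, g j k • (T * B k * T') = B j) := by
  constructor
  · intro H j
    calc ∑ k, g j k • (T * B k * T')
        = ∑ k, g j k • ((∑ i, A k i • (B i * T)) * T') := by simp only [H]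
      _ = ∑ k, ∑ i, (g j k * A k i) • (B i * (T * T')) := by
          simp only [Finset.sum_mul, smul_mul_assoc, Finset.smul_sum, smul_smul, mul_assoc]
      _ = ∑ i, (∑ k, g j k * A k i) • B i := by
          rw [Finset.sum_comm]
          simp only [hT, mul_one, Finset.sum_smul]
      _ = B j := by
          have h1 : ∀ i, ∑ k, g j k * A k i = (1 : Matrix (Fin D) (Fin D) ℝ) j i := by
            intro i; rw [← hgA, Matrix.mul_apply]
          simp only [h1, Matrix.one_apply, ite_smul, one_smul, zero_smul,
            Finset.sum_ite_eq, Finset.mem_univ, if_true]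
  · intro H k
    calc ∑ j, A k j • (B j * T)
        = ∑ j, A k j • ((∑ l, g j l • (T * B l * T')) * T) := by
          refine Finset.sum_congr rfl fun j _ => ?_
          rw [H j]
      _ = ∑ j, ∑ l, (A k j * g j l) • (T * B l * (T' * T)) := by
          simp only [Finset.sum_mul, smul_mul_assoc, Finset.smul_sum, smul_smul, mul_assoc]
      _ = ∑ l, (∑ j, A k j * g j l) • (T * B l) := by
          rw [Finset.sum_comm]
          simp only [hT', mul_one, Finset.sum_smul]
      _ = T * B k := by
          have h1 : ∀ l, ∑ j, A k j * g j l = (1 : Matrix (Fin D) (Fin D) ℝ) k l := by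
            intro l; rw [← hAg, Matrix.mul_apply]
          simp only [h1, Matrix.one_apply, ite_smul, one_smul, zero_smul,
            Finset.sum_ite_eq, Finset.mem_univ, if_true]

end aux

theorem stmt0 {𝕂 : Type*} [RCLike 𝕂] (D N : ℕ)
    (G : Subgroup (Matrix.GeneralLinearGroup (Fin D) ℝ))
    (τ : G →* Matrix.GeneralLinearGroup (Fin N) 𝕂)
    (B : Fin D → Matrix (Fin N) (Fin N) 𝕂) (m : ℝ) :
    (∀ (g : G) (f : (Fin D → ℝ) → (Fin N → 𝕂)), ContDiff ℝ (⊤ : ℕ∞) f →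
        covOp B m (groupAct (Units.val (τ g)) (Units.val ((g : Matrix.GeneralLinearGroup (Fin D) ℝ)⁻¹)) f)
          = groupAct (Units.val (τ g)) (Units.val ((g : Matrix.GeneralLinearGroup (Fin D) ℝ)⁻¹)) (covOp B m f))
    ↔ (∀ (g : G) (j : Fin D),
        ∑ k, (Units.val (g : Matrix.GeneralLinearGroup (Fin D) ℝ)) j k •
          (Units.val (τ g) * B k * Units.val ((τ g)⁻¹)) = B j) := by
  have hiff : ∀ g : G,
      (∀ f : (Fin D → ℝ) → (Fin N → 𝕂), ContDiff ℝ (⊤ : ℕ∞) f →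
        covOp B m (groupAct (Units.val (τ g)) (Units.val ((g : Matrix.GeneralLinearGroup (Fin D) ℝ)⁻¹)) f)
          = groupAct (Units.val (τ g)) (Units.val ((g : Matrix.GeneralLinearGroup (Fin D) ℝ)⁻¹)) (covOp B m f))
      ↔ (∀ j, ∑ k, (Units.val (g : Matrix.GeneralLinearGroup (Fin D) ℝ)) j k •
          (Units.val (τ g) * B k * Units.val ((τ g)⁻¹)) = B j) := by
    intro g
    rw [main_iff B m (Units.val (τ g)) (Units.val ((g : Matrix.GeneralLinearGroup (Fin D) ℝ)⁻¹))]
    exact cond_iff B (Units.val (τ g)) (Units.val ((τ g)⁻¹))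
      (Units.mul_inv _) (Units.inv_mul _)
      (Units.val (g : Matrix.GeneralLinearGroup (Fin D) ℝ))
      (Units.val ((g : Matrix.GeneralLinearGroup (Fin D) ℝ)⁻¹))
      (Units.mul_inv _) (Units.inv_mul _)
  exact ⟨fun H g => (hiff g).1 (H g), fun H g => (hiff g).2 (H g)⟩
end

section
/- Let D ≥ 2 and suppose B₁,…,B_D ∈ M_N(ℂ) satisfy the SO(D)-covariance condition with respect to a representation τ of SO(D). Then there exists a constant C ∈ ℂ and a natural number n with 2n ≤ N such that det(i Σⱼ Bⱼ pⱼ) = C·(p₁² + ⋯ + p_D²)ⁿ for all p ∈ ℝ^D. Moreover, if N is odd then C = 0, i.e., the matrix Σⱼ Bⱼ pⱼ is singular for every p. -/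
/-!
Covariance says that conjugation by `τ g` turns `∑ⱼ pⱼ Bⱼ` into `∑ⱼ (p g)ⱼ Bⱼ`, so
`p ↦ det (∑ⱼ pⱼ Bⱼ)` is invariant under `SO(D)`. Rotations in the coordinate planes through the
first axis carry any `p` to `|p| e₀`, hence `det (∑ⱼ pⱼ Bⱼ) = |p| ^ N det B₀`, which is a multiple of
`(p ⬝ p) ^ (N / 2)` for even `N`. For odd `N`, comparing `p = -e₀` with `p = e₀` gives
`det B₀ = (-1) ^ N det B₀`, so `det B₀ = 0`.
-/

open Matrix

section PlaneRotation

variable {n : Type*} [DecidableEq n] {i j : n}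

/-- Acts on row vectors, `p ↦ p ᵥ* planeRotation i j θ`. -/
noncomputable def planeRotation (i j : n) (θ : ℝ) : Matrix n n ℝ :=
  1 + (Real.cos θ - 1) • (single i i 1 + single j j 1) + Real.sin θ • (single j i 1 - single i j 1)

theorem planeRotation_zero : planeRotation i j 0 = 1 := by
  simp [planeRotation]

theorem transpose_planeRotation (θ : ℝ) : (planeRotation i j θ)ᵀ = planeRotation i j (-θ) := by
  simp only [planeRotation, transpose_add, transpose_smul, transpose_sub, transpose_one,
    transpose_single, Real.cos_neg, Real.sin_neg]
  module

variable [Fintype n]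

theorem planeRotation_mul (hij : i ≠ j) (θ φ : ℝ) :
    planeRotation i j θ * planeRotation i j φ = planeRotation i j (θ + φ) := by
  have hij' : ∀ (a b : n) (c d : ℝ), single a i c * single j b d = 0 :=
    fun a b c d => single_mul_single_of_ne (c := c) a i j hij d
  have hji : ∀ (a b : n) (c d : ℝ), single a j c * single i b d = 0 :=
    fun a b c d => single_mul_single_of_ne (c := c) a j i hij.symm d
  simp only [planeRotation, add_mul, mul_add, sub_mul, mul_sub, smul_mul_assoc, mul_smul_comm,
    one_mul, mul_one, single_mul_single_same, hij', hji, Real.cos_add, Real.sin_add]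
  module

theorem transpose_mul_planeRotation (hij : i ≠ j) (θ : ℝ) :
    (planeRotation i j θ)ᵀ * planeRotation i j θ = 1 := by
  rw [transpose_planeRotation, planeRotation_mul hij, neg_add_cancel, planeRotation_zero]

theorem planeRotation_mul_transpose (hij : i ≠ j) (θ : ℝ) :
    planeRotation i j θ * (planeRotation i j θ)ᵀ = 1 := by
  rw [transpose_planeRotation, planeRotation_mul hij, add_neg_cancel, planeRotation_zero]

/-- The determinant is `±1` by orthogonality, and a square since `R θ = R (θ / 2) ^ 2`. -/
theorem det_planeRotation (hij : i ≠ j) (θ : ℝ) : (planeRotation i j θ).det = 1 := by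
  have hsq : (planeRotation i j θ).det = (planeRotation i j (θ / 2)).det ^ 2 := by
    rw [sq, ← det_mul, planeRotation_mul hij, add_halves]
  have hpm : (planeRotation i j θ).det ^ 2 = 1 := by
    simpa [sq, det_mul, det_transpose] using congrArg det (transpose_mul_planeRotation hij θ)
  nlinarith [sq_nonneg (planeRotation i j (θ / 2)).det]

theorem vecMul_planeRotation (hij : i ≠ j) (θ : ℝ) (p : n → ℝ) :
    p ᵥ* planeRotation i j θ = Function.update (Function.update p i
      (Real.cos θ * p i + Real.sin θ * p j)) j (Real.cos θ * p j - Real.sin θ * p i) := by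
  rw [← transpose_transpose (planeRotation i j θ), vecMul_transpose, transpose_planeRotation]
  ext k
  simp only [planeRotation, add_mulVec, sub_mulVec, smul_mulVec, one_mulVec, single_mulVec,
    Pi.add_apply, Pi.sub_apply, Pi.smul_apply, Function.update_apply, Pi.zero_apply, smul_eq_mul,
    Real.cos_neg, Real.sin_neg]
  rcases eq_or_ne k i with rfl | hki
  · simp [hij]
    ring
  rcases eq_or_ne k j with rfl | hkj
  · simp [hki]
    ring
  · simp [hki, hkj]

theorem vecMul_planeRotation_arg (hij : i ≠ j) (p : n → ℝ) :
    p ᵥ* planeRotation i j (Complex.arg ⟨p i, p j⟩) =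
      Function.update (Function.update p j 0) i √(p i ^ 2 + p j ^ 2) := by
  set z : ℂ := ⟨p i, p j⟩
  have hcos : ‖z‖ * Real.cos z.arg = p i := Complex.norm_mul_cos_arg z
  have hsin : ‖z‖ * Real.sin z.arg = p j := Complex.norm_mul_sin_arg z
  have hnorm : ‖z‖ = √(p i ^ 2 + p j ^ 2) := by
    rw [Complex.norm_def, Complex.normSq_mk, sq, sq]
  rw [vecMul_planeRotation hij, Function.update_comm hij.symm, ← hnorm]
  congr 1
  · congr 1
    linear_combination -Real.cos z.arg * hcos - Real.sin z.arg * hsin +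
      ‖z‖ * Real.sin_sq_add_cos_sq z.arg
  · linear_combination Real.sin z.arg * hcos - Real.cos z.arg * hsin

end PlaneRotation

theorem dotProduct_vecMul_self_of_mul_transpose {m R : Type*} [Fintype m] [DecidableEq m]
    [CommSemiring R] {A : Matrix m m R} (hA : A * Aᵀ = 1) (v : m → R) : (v ᵥ* A) ⬝ᵥ (v ᵥ* A) = v ⬝ᵥ v := by
  rw [← dotProduct_mulVec, ← vecMul_transpose, vecMul_vecMul, hA, vecMul_one]

section Radial

variable {n X : Type*} [Fintype n] [DecidableEq n] {i : n}

theorem eq_pi_single_sqrt_dotProduct_self {q : n → ℝ} (hq : ∀ k ≠ i, q k = 0) (hqi : 0 ≤ q i) :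
    q = Pi.single i √(q ⬝ᵥ q) := by
  have hqq : q ⬝ᵥ q = q i ^ 2 := by
    rw [dotProduct, Fintype.sum_eq_single i fun k hk => by rw [hq k hk, mul_zero], sq]
  rw [hqq, Real.sqrt_sq hqi]
  ext k
  rcases eq_or_ne k i with rfl | hki
  · simp
  · simp [hki, hq k hki]

theorem eq_pi_single_sqrt_of_planeRotation_invariant [Nontrivial n] {f : (n → ℝ) → X}
    (hf : ∀ j ≠ i, ∀ θ p, f (p ᵥ* planeRotation i j θ) = f p) (p : n → ℝ) :
    f p = f (Pi.single i √(p ⬝ᵥ p)) := by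
  have hstep : ∀ j ≠ i, ∀ p : n → ℝ,
      f p = f (Function.update (Function.update p j 0) i √(p i ^ 2 + p j ^ 2)) ∧
      Function.update (Function.update p j 0) i √(p i ^ 2 + p j ^ 2) ⬝ᵥ
        Function.update (Function.update p j 0) i √(p i ^ 2 + p j ^ 2) = p ⬝ᵥ p := by
    intro j hji p
    rw [← vecMul_planeRotation_arg hji.symm]
    exact ⟨(hf j hji _ p).symm,
      dotProduct_vecMul_self_of_mul_transpose (planeRotation_mul_transpose hji.symm _) p⟩
  have hreduce : ∀ s : Finset n, ∀ p : n → ℝ, (∀ k ∉ s, k ≠ i → p k = 0) → 0 ≤ p i →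
      f p = f (Pi.single i √(p ⬝ᵥ p)) := by
    intro s
    induction s using Finset.induction_on with
    | empty =>
      intro p hp hpi
      rw [← eq_pi_single_sqrt_dotProduct_self (fun k => hp k (Finset.notMem_empty k)) hpi]
    | insert j s _ ih =>
      intro p hp hpi
      rcases eq_or_ne j i with rfl | hji
      · exact ih p (fun k hks hki => hp k (by simp [hki, hks]) hki) hpi
      obtain ⟨hfq, hqq⟩ := hstep j hji p
      rw [hfq, ← hqq]
      refine ih _ (fun k hks hki => ?_) (by simp [Real.sqrt_nonneg])
      rw [Function.update_of_ne hki]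
      rcases eq_or_ne k j with rfl | hkj
      · exact Function.update_self ..
      · rw [Function.update_of_ne hkj]
        exact hp k (by simp [hkj, hks]) hki
  obtain ⟨j, hji⟩ := exists_ne i
  obtain ⟨hfq, hqq⟩ := hstep j hji p
  rw [hfq, hreduce Finset.univ _ (by simp) (by simp [Real.sqrt_nonneg]), hqq]

end Radial

/-- Covariance `∑ₖ aⱼₖ • M Bₖ M⁻¹ = Bⱼ` turns the substitution `p ↦ p ᵥ* a` into a conjugation
by `M`. -/
theorem det_sum_vecMul_smul_eq_of_covariant {K R ι m : Type*} [CommRing K] [CommRing R]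
    [Algebra K R] [Fintype ι] [Fintype m] [DecidableEq m] {a : Matrix ι ι K}
    {M : (Matrix m m R)ˣ} {B : ι → Matrix m m R}
    (hcov : ∀ j, ∑ k, a j k • ((M : Matrix m m R) * B k * (↑M⁻¹ : Matrix m m R)) = B j)
    (p : ι → K) :
    (∑ k, (p ᵥ* a) k • B k).det = (∑ j, p j • B j).det := by
  rw [← det_units_conj M]
  congr 1
  conv_rhs => rw [← funext hcov]
  simp only [Finset.mul_sum, Finset.sum_mul, Finset.smul_sum, mul_smul_comm, smul_mul_assoc,
    vecMul, dotProduct, Finset.sum_smul, smul_smul]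
  exact Finset.sum_comm

section RotationInvariantPencil

variable {ι m : Type*} [Fintype ι] [DecidableEq ι] [Nontrivial ι] [Fintype m] [DecidableEq m]
  {B : ι → Matrix m m ℂ} {i : ι}

theorem det_sum_smul_eq_of_planeRotation_invariant
    (hB : ∀ j ≠ i, ∀ θ (p : ι → ℝ),
      (∑ k, (p ᵥ* planeRotation i j θ) k • B k).det = (∑ k, p k • B k).det) (p : ι → ℝ) :
    (∑ k, p k • B k).det = ((√(p ⬝ᵥ p) : ℝ) : ℂ) ^ Fintype.card m * (B i).det := by
  rw [eq_pi_single_sqrt_of_planeRotation_invariant (f := fun p => (∑ k, p k • B k).det) hB p,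
    Fintype.sum_eq_single i fun k hk => by rw [Pi.single_eq_of_ne hk, zero_smul],
    Pi.single_eq_same, ← Complex.coe_smul, det_smul]

theorem det_eq_zero_of_planeRotation_invariant
    (hB : ∀ j ≠ i, ∀ θ (p : ι → ℝ),
      (∑ k, (p ᵥ* planeRotation i j θ) k • B k).det = (∑ k, p k • B k).det)
    (hm : Odd (Fintype.card m)) : (B i).det = 0 := by
  have h := det_sum_smul_eq_of_planeRotation_invariant hB (Pi.single i (-1))
  rw [Fintype.sum_eq_single i fun k hk => by rw [Pi.single_eq_of_ne hk, zero_smul],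
    Pi.single_eq_same, neg_one_smul, det_neg, hm.neg_one_pow] at h
  simp only [dotProduct_single, Pi.single_eq_same, mul_neg, mul_one, neg_neg, Real.sqrt_one,
    Complex.ofReal_one, one_pow, one_mul] at h
  linear_combination -h / 2

end RotationInvariantPencil

theorem ofReal_sqrt_pow_of_even {x : ℝ} (hx : 0 ≤ x) {N : ℕ} (hN : Even N) :
    ((√x : ℝ) : ℂ) ^ N = (x : ℂ) ^ (N / 2) := by
  rw [← Nat.two_mul_div_two_of_even hN, pow_mul, ← Complex.ofReal_pow, Real.sq_sqrt hx,
    Nat.mul_div_cancel_left _ two_pos]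

theorem stmt5 (D N : ℕ) (hD : 2 ≤ D)
    (G : Subgroup (Matrix.GeneralLinearGroup (Fin D) ℝ))
    -- G is SO(D)
    (hG : ∀ g : Matrix.GeneralLinearGroup (Fin D) ℝ,
      g ∈ G ↔ ((Units.val g)ᵀ * Units.val g = 1 ∧ (Units.val g).det = 1))
    (τ : G →* Matrix.GeneralLinearGroup (Fin N) ℂ)
    (B : Fin D → Matrix (Fin N) (Fin N) ℂ)
    -- B satisfies the SO(D)-covariance condition with respect to τ
    (hcov : ∀ (g : G) (j : Fin D),
      ∑ k, (Units.val (g : Matrix.GeneralLinearGroup (Fin D) ℝ)) j k •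
        (Units.val (τ g) * B k * Units.val ((τ g)⁻¹)) = B j) :
    ∃ (C : ℂ) (n : ℕ), 2 * n ≤ N ∧
      (∀ p : Fin D → ℝ,
        (Complex.I • ∑ j, ((p j : ℝ) : ℂ) • B j).det = C * (∑ j, ((p j : ℝ) : ℂ) ^ 2) ^ n) ∧
      (Odd N → C = 0 ∧ ∀ p : Fin D → ℝ, (∑ j, ((p j : ℝ) : ℂ) • B j).det = 0) := by
  have : Nontrivial (Fin D) := Fin.nontrivial_iff_two_le.mpr hD
  let i : Fin D := ⟨0, by omega⟩
  have hrot : ∀ j ≠ i, ∀ θ (p : Fin D → ℝ),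
      (∑ k, (p ᵥ* planeRotation i j θ) k • B k).det = (∑ k, p k • B k).det := by
    intro j hji θ p
    have hmem : GeneralLinearGroup.mkOfDetNeZero (planeRotation i j θ)
        (by simp [det_planeRotation hji.symm]) ∈ G :=
      (hG _).2 ⟨transpose_mul_planeRotation hji.symm θ, det_planeRotation hji.symm θ⟩
    exact det_sum_vecMul_smul_eq_of_covariant (hcov ⟨_, hmem⟩) p
  have hdet : ∀ p : Fin D → ℝ,
      (∑ k, p k • B k).det = ((√(p ⬝ᵥ p) : ℝ) : ℂ) ^ N * (B i).det := fun p => by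
    rw [det_sum_smul_eq_of_planeRotation_invariant hrot p, Fintype.card_fin]
  have hodd : Odd N → (B i).det = 0 := fun hN =>
    det_eq_zero_of_planeRotation_invariant hrot (by rwa [Fintype.card_fin])
  simp only [Complex.coe_smul]
  refine ⟨Complex.I ^ N * (B i).det, N / 2, Nat.mul_div_le N 2, fun p => ?_,
    fun hN => ⟨by rw [hodd hN, mul_zero], fun p => by rw [hdet, hodd hN, mul_zero]⟩⟩
  rw [det_smul, Fintype.card_fin, hdet]
  rcases Nat.even_or_odd N with hN | hN
  · have hpp : 0 ≤ p ⬝ᵥ p := Finset.sum_nonneg fun j _ => mul_self_nonneg (p j)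
    rw [ofReal_sqrt_pow_of_even hpp hN]
    push_cast [dotProduct, sq]
    ring
  · rw [hodd hN]
    ring
end

section
/- Let a,b,c,m₀,m₁ ∈ ℝ and for p = (p₀,p₁,p₂) ∈ ℝ³ define the 4×4 complex matrix 𝒟̂(ip) with rows: (m₀, a i p₀, a i p₁, a i p₂), (b i p₀, m₁, −c i p₂, c i p₁), (b i p₁, c i p₂, m₁, −c i p₀), (b i p₂, −c i p₁, c i p₀, m₁). Then det 𝒟̂(ip) = (−c² p² + m₁²)(a b p² + m₀ m₁), where p² = p₀² + p₁² + p₂². -/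
/-!
With `v = (x, y, z)` and `A = m • 1 + γ • [v]ₓ`, the matrix is `!![m₀, α vᵀ; β v, A]`, so its
determinant is `m₀ det A - α β vᵀ (adj A) v`. Since `[v]ₓ v = 0`, `v` is an eigenvector of `A` for
`m`, hence `(adj A) v = (m ^ 2 + γ ^ 2 ‖v‖²) v` and `det A = m (m ^ 2 + γ ^ 2 ‖v‖²)`, which gives the
factorization over any commutative ring. The theorem is the case `α = a i`, `β = b i`, `γ = c i`.
-/

open Matrix Complex

theorem det_bordered_scalar_add_cross {R : Type*} [CommRing R] (m₀ m α β γ x y z : R) :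
    (!![m₀, α * x, α * y, α * z;
        β * x, m, -(γ * z), γ * y;
        β * y, γ * z, m, -(γ * x);
        β * z, -(γ * y), γ * x, m]).det
    = (m ^ 2 + γ ^ 2 * (x ^ 2 + y ^ 2 + z ^ 2)) * (m₀ * m - α * β * (x ^ 2 + y ^ 2 + z ^ 2)) := by
  simp [det_succ_row_zero, Fin.sum_univ_succ, Fin.succAbove]
  ring

theorem stmt13 (a b c m₀ m₁ : ℝ) (p : Fin 3 → ℝ) :
    (!![(m₀ : ℂ), a * I * p 0, a * I * p 1, a * I * p 2;
        b * I * p 0, (m₁ : ℂ), -(c * I * p 2), c * I * p 1;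
        b * I * p 1, c * I * p 2, (m₁ : ℂ), -(c * I * p 0);
        b * I * p 2, -(c * I * p 1), c * I * p 0, (m₁ : ℂ)]).det
    = (-(c : ℂ) ^ 2 * ((p 0 ^ 2 + p 1 ^ 2 + p 2 ^ 2 : ℝ) : ℂ) + (m₁ : ℂ) ^ 2) *
        ((a : ℂ) * (b : ℂ) * ((p 0 ^ 2 + p 1 ^ 2 + p 2 ^ 2 : ℝ) : ℂ) + (m₀ : ℂ) * (m₁ : ℂ)) := by
  rw [det_bordered_scalar_add_cross, mul_pow, mul_mul_mul_comm, I_sq, I_mul_I]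
  push_cast
  ring
end

section
/- Let ζ₁,…,ζ_n be complex numbers with Re ζᵢ > 0 for all i, and t₁ < t₂ < ⋯ < t_n real numbers. Then ∫_{−∞}^{∞} ∏_{i=1}^{n} e^{−ζᵢ|t−tᵢ|} dt = (1/(ζ₁+⋯+ζ_n)) ∏_{i=2}^{n} e^{−ζᵢ(tᵢ−t₁)} + Σ_{j=1}^{n−1} [ ∏_{i=1}^{j−1} e^{−ζᵢ(t_j−tᵢ)} · (t_{j+1}−t_j) · ∏_{i=j+2}^{n} e^{−ζᵢ(tᵢ−t_{j+1})} · ∫₀¹ e^{−[(ζ₁+⋯+ζ_j)s + (ζ_{j+1}+⋯+ζ_n)(1−s)](t_{j+1}−t_j)} ds ] + (1/(ζ₁+⋯+ζ_n)) ∏_{i=1}^{n−1} e^{−ζᵢ(t_n−tᵢ)}. -/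
/-!
On each of the intervals cut out by t₁ < ⋯ < t_n the exponent -∑ ζᵢ |s - tᵢ| is affine in s:
on [t_j, t_{j+1}] it is a constant minus (A_j (s - t_j) + B_j (t_{j+1} - s)) with
A_j = ζ₁ + ⋯ + ζ_j and B_j = ζ_{j+1} + ⋯ + ζ_n. On the two unbounded pieces this leaves an
exponential with rate ζ₁ + ⋯ + ζ_n, which integrates to its reciprocal; on each bounded piece the
substitution s = t_j + u (t_{j+1} - t_j) gives the integral over [0, 1].
-/

open Finset MeasureTheory
open scoped Complex

theorem prod_cexp_neg_mul_add {ι : Type*} (S : Finset ι) (ζ : ι → ℂ) (y : ι → ℝ) (u : ℝ) :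
    ∏ i ∈ S, cexp (-ζ i * ((y i + u : ℝ) : ℂ)) =
      (∏ i ∈ S, cexp (-ζ i * (y i : ℂ))) * cexp (-(∑ i ∈ S, ζ i) * (u : ℂ)) := by
  simp only [← Complex.exp_sum, ← Complex.exp_add]
  congr 1
  rw [neg_mul, sum_mul, ← sum_neg_distrib, ← sum_add_distrib]
  refine sum_congr rfl fun i _ => ?_
  push_cast
  ring

theorem intervalIntegral_cexp_neg_interpolate (A B : ℂ) (a b : ℝ) :
    ∫ s in a..b, cexp (-(A * ((s - a : ℝ) : ℂ) + B * ((b - s : ℝ) : ℂ))) =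
      ((b - a : ℝ) : ℂ) *
        ∫ u in (0 : ℝ)..1, cexp (-((A * (u : ℂ) + B * (1 - (u : ℂ))) * ((b - a : ℝ) : ℂ))) := by
  have h := intervalIntegral.smul_integral_comp_add_mul (a := 0) (b := 1)
    (fun s : ℝ => cexp (-(A * ((s - a : ℝ) : ℂ) + B * ((b - s : ℝ) : ℂ)))) (b - a) a
  simp only [mul_zero, add_zero, mul_one, add_sub_cancel] at h
  rw [← h, Complex.real_smul]
  congr 2
  funext u
  congr 1
  push_cast
  ring

section Gap

variable (ζ : ℕ → ℂ) (t : ℕ → ℝ) {s : ℝ}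

theorem prod_Icc_cexp_neg_mul_abs_of_le (j : ℕ) (h : ∀ i ∈ Icc 1 j, t i ≤ s) :
    ∏ i ∈ Icc 1 j, cexp (-ζ i * ((|s - t i| : ℝ) : ℂ)) =
      (∏ i ∈ Icc 1 (j - 1), cexp (-ζ i * ((t j - t i : ℝ) : ℂ))) *
        cexp (-(∑ i ∈ Icc 1 j, ζ i) * ((s - t j : ℝ) : ℂ)) := by
  have hsplit : ∀ i ∈ Icc 1 j, |s - t i| = (t j - t i) + (s - t j) := fun i hi => by
    rw [abs_of_nonneg (sub_nonneg.mpr (h i hi))]; ring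
  rw [prod_congr rfl fun i hi => by rw [hsplit i hi], prod_cexp_neg_mul_add]
  congr 1
  refine (prod_subset (Icc_subset_Icc le_rfl (Nat.sub_le j 1)) ?_).symm
  intro i hi hi'
  obtain rfl : i = j := by simp only [mem_Icc] at hi hi'; omega
  simp

theorem prod_Icc_cexp_neg_mul_abs_of_ge (j n : ℕ) (h : ∀ i ∈ Icc (j + 1) n, s ≤ t i) :
    ∏ i ∈ Icc (j + 1) n, cexp (-ζ i * ((|s - t i| : ℝ) : ℂ)) =
      (∏ i ∈ Icc (j + 2) n, cexp (-ζ i * ((t i - t (j + 1) : ℝ) : ℂ))) *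
        cexp (-(∑ i ∈ Icc (j + 1) n, ζ i) * ((t (j + 1) - s : ℝ) : ℂ)) := by
  have hsplit : ∀ i ∈ Icc (j + 1) n, |s - t i| = (t i - t (j + 1)) + (t (j + 1) - s) :=
    fun i hi => by rw [abs_of_nonpos (sub_nonpos.mpr (h i hi))]; ring
  rw [prod_congr rfl fun i hi => by rw [hsplit i hi], prod_cexp_neg_mul_add]
  congr 1
  refine (prod_subset (Icc_subset_Icc (Nat.le_succ _) le_rfl) ?_).symm
  intro i hi hi'
  obtain rfl : i = j + 1 := by simp only [mem_Icc] at hi hi'; omega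
  simp

/-- For `j = 0` or `j = n` the values `t 0`, `t (n + 1)` only enter multiplied by an empty sum. -/
theorem prod_cexp_neg_mul_abs_of_mem_gap {n j : ℕ} (hj : j ≤ n)
    (hleft : ∀ i ∈ Icc 1 j, t i ≤ s) (hright : ∀ i ∈ Icc (j + 1) n, s ≤ t i) :
    ∏ i ∈ Icc 1 n, cexp (-ζ i * ((|s - t i| : ℝ) : ℂ)) =
      (∏ i ∈ Icc 1 (j - 1), cexp (-ζ i * ((t j - t i : ℝ) : ℂ))) *
      (∏ i ∈ Icc (j + 2) n, cexp (-ζ i * ((t i - t (j + 1) : ℝ) : ℂ))) *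
      cexp (-((∑ i ∈ Icc 1 j, ζ i) * ((s - t j : ℝ) : ℂ)
        + (∑ i ∈ Icc (j + 1) n, ζ i) * ((t (j + 1) - s : ℝ) : ℂ))) := by
  rw [show Icc 1 n = Ioc 0 n from Icc_add_one_left_eq_Ioc 0 n,
    ← prod_Ioc_consecutive _ (Nat.zero_le j) hj,
    show Ioc 0 j = Icc 1 j from (Icc_add_one_left_eq_Ioc 0 j).symm,
    ← Icc_add_one_left_eq_Ioc j n, prod_Icc_cexp_neg_mul_abs_of_le ζ t j hleft,
    prod_Icc_cexp_neg_mul_abs_of_ge ζ t j n hright, neg_add, Complex.exp_add, neg_mul, neg_mul]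
  ring

theorem prod_cexp_neg_mul_abs_of_forall_ge {n : ℕ} (h : ∀ i ∈ Icc 1 n, s ≤ t i) :
    ∏ i ∈ Icc 1 n, cexp (-ζ i * ((|s - t i| : ℝ) : ℂ)) =
      (∏ i ∈ Icc 2 n, cexp (-ζ i * ((t i - t 1 : ℝ) : ℂ))) *
        cexp (-((∑ i ∈ Icc 1 n, ζ i) * ((t 1 - s : ℝ) : ℂ))) := by
  simpa using prod_cexp_neg_mul_abs_of_mem_gap ζ t (Nat.zero_le n) (by simp) h

theorem prod_cexp_neg_mul_abs_of_forall_le {n : ℕ} (h : ∀ i ∈ Icc 1 n, t i ≤ s) :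
    ∏ i ∈ Icc 1 n, cexp (-ζ i * ((|s - t i| : ℝ) : ℂ)) =
      (∏ i ∈ Icc 1 (n - 1), cexp (-ζ i * ((t n - t i : ℝ) : ℂ))) *
        cexp (-((∑ i ∈ Icc 1 n, ζ i) * ((s - t n : ℝ) : ℂ))) := by
  simpa using prod_cexp_neg_mul_abs_of_mem_gap ζ t le_rfl h (by simp)

theorem intervalIntegral_prod_cexp_neg_mul_abs {n j : ℕ} (ht : MonotoneOn t (Icc 1 n))
    (hj : j ∈ Ico 1 n) :
    ∫ s in t j..t (j + 1), ∏ i ∈ Icc 1 n, cexp (-ζ i * ((|s - t i| : ℝ) : ℂ)) =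
      (∏ i ∈ Icc 1 (j - 1), cexp (-ζ i * ((t j - t i : ℝ) : ℂ))) *
      ((t (j + 1) - t j : ℝ) : ℂ) *
      (∏ i ∈ Icc (j + 2) n, cexp (-ζ i * ((t i - t (j + 1) : ℝ) : ℂ))) *
      ∫ u in (0 : ℝ)..1, cexp (-(((∑ i ∈ Icc 1 j, ζ i) * (u : ℂ)
        + (∑ i ∈ Icc (j + 1) n, ζ i) * (1 - (u : ℂ))) * ((t (j + 1) - t j : ℝ) : ℂ))) := by
  obtain ⟨hj1, hjn⟩ := mem_Ico.mp hj
  have hjm : j ∈ Icc 1 n := mem_Icc.mpr ⟨hj1, hjn.le⟩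
  have hjm' : j + 1 ∈ Icc 1 n := mem_Icc.mpr ⟨by omega, hjn⟩
  have hgap : ∀ s ∈ Set.uIcc (t j) (t (j + 1)), _ := fun s hs => by
    rw [Set.uIcc_of_le (ht hjm hjm' j.le_succ)] at hs
    refine prod_cexp_neg_mul_abs_of_mem_gap ζ t (s := s) hjn.le (fun i hi => ?_) (fun i hi => ?_)
    · exact (ht (Icc_subset_Icc le_rfl hjn.le hi) hjm (mem_Icc.mp hi).2).trans hs.1
    · exact hs.2.trans (ht hjm' (Icc_subset_Icc (by omega) le_rfl hi) (mem_Icc.mp hi).1)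
  rw [intervalIntegral.integral_congr hgap, intervalIntegral.integral_const_mul,
    intervalIntegral_cexp_neg_interpolate]
  ring

end Gap

theorem integrableOn_Iic_cexp_neg_mul_sub {c : ℂ} (hc : 0 < c.re) (a : ℝ) :
    IntegrableOn (fun s : ℝ => cexp (-(c * ((a - s : ℝ) : ℂ)))) (Set.Iic a) := by
  have h := (integrableOn_exp_mul_complex_Iic hc a).const_mul (cexp (-(c * a)))
  refine IntegrableOn.congr_fun h (fun s _ => ?_) measurableSet_Iic
  rw [← Complex.exp_add]
  push_cast
  ring_nf

theorem integral_Iic_cexp_neg_mul_sub {c : ℂ} (hc : 0 < c.re) (a : ℝ) :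
    ∫ s in Set.Iic a, cexp (-(c * ((a - s : ℝ) : ℂ))) = 1 / c := by
  have hc0 : c ≠ 0 := fun h => by simp [h] at hc
  have h : ∀ s : ℝ, cexp (-(c * ((a - s : ℝ) : ℂ))) = cexp (-(c * a)) * cexp (c * s) := by
    intro s
    rw [← Complex.exp_add]
    push_cast
    ring_nf
  simp_rw [h]
  rw [integral_const_mul, integral_exp_mul_complex_Iic hc, mul_div_assoc', ← Complex.exp_add,
    neg_add_cancel, Complex.exp_zero]

theorem integrableOn_Ioi_cexp_neg_mul_sub {c : ℂ} (hc : 0 < c.re) (a : ℝ) :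
    IntegrableOn (fun s : ℝ => cexp (-(c * ((s - a : ℝ) : ℂ)))) (Set.Ioi a) := by
  have h := (integrableOn_exp_mul_complex_Ioi (a := -c) (by simpa using hc) a).const_mul
    (cexp (c * a))
  refine IntegrableOn.congr_fun h (fun s _ => ?_) measurableSet_Ioi
  rw [← Complex.exp_add]
  push_cast
  ring_nf

theorem integral_Ioi_cexp_neg_mul_sub {c : ℂ} (hc : 0 < c.re) (a : ℝ) :
    ∫ s in Set.Ioi a, cexp (-(c * ((s - a : ℝ) : ℂ))) = 1 / c := by
  have hc0 : c ≠ 0 := fun h => by simp [h] at hc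
  have h : ∀ s : ℝ, cexp (-(c * ((s - a : ℝ) : ℂ))) = cexp (c * a) * cexp (-c * s) := by
    intro s
    rw [← Complex.exp_add]
    push_cast
    ring_nf
  simp_rw [h]
  rw [integral_const_mul, integral_exp_mul_complex_Ioi (by simpa using hc)]
  rw [neg_mul c, Complex.exp_neg]
  field_simp

theorem integral_eq_Iic_add_intervalIntegral_add_Ioi {E : Type*} [NormedAddCommGroup E]
    [NormedSpace ℝ E] {f : ℝ → E} {a b : ℝ} (hab : a ≤ b) (hl : IntegrableOn f (Set.Iic a))
    (hm : IntervalIntegrable f volume a b) (hr : IntegrableOn f (Set.Ioi b)) :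
    ∫ s, f s = (∫ s in Set.Iic a, f s) + (∫ s in a..b, f s) + ∫ s in Set.Ioi b, f s := by
  have hr' : IntegrableOn f (Set.Ioi a) := by
    rw [← Set.Ioc_union_Ioi_eq_Ioi hab]
    exact ((intervalIntegrable_iff_integrableOn_Ioc_of_le hab).1 hm).union hr
  rw [← intervalIntegral.integral_Iic_add_Ioi hl hr', add_assoc,
    intervalIntegral.integral_interval_add_Ioi' hm hr]

theorem stmt19 (n : ℕ) (hn : 1 ≤ n) (ζ : ℕ → ℂ) (t : ℕ → ℝ)
    -- Re ζᵢ > 0, for i = 1,…,n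
    (hζ : ∀ i ∈ Finset.Icc 1 n, 0 < (ζ i).re)
    -- t₁ < t₂ < ⋯ < t_n
    (ht : ∀ i ∈ Finset.Icc 1 n, ∀ j ∈ Finset.Icc 1 n, i < j → t i < t j) :
    ∫ s : ℝ, ∏ i ∈ Finset.Icc 1 n, Complex.exp (-ζ i * ((|s - t i| : ℝ) : ℂ))
      = (1 / ∑ i ∈ Finset.Icc 1 n, ζ i) *
          ∏ i ∈ Finset.Icc 2 n, Complex.exp (-ζ i * ((t i - t 1 : ℝ) : ℂ))
        + ∑ j ∈ Finset.Icc 1 (n - 1),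
            (∏ i ∈ Finset.Icc 1 (j - 1), Complex.exp (-ζ i * ((t j - t i : ℝ) : ℂ))) *
            ((t (j + 1) - t j : ℝ) : ℂ) *
            (∏ i ∈ Finset.Icc (j + 2) n, Complex.exp (-ζ i * ((t i - t (j + 1) : ℝ) : ℂ))) *
            (∫ s in (0:ℝ)..1, Complex.exp
              (-(((∑ i ∈ Finset.Icc 1 j, ζ i) * (s : ℂ)
                  + (∑ i ∈ Finset.Icc (j + 1) n, ζ i) * (1 - (s : ℂ)))
                * ((t (j + 1) - t j : ℝ) : ℂ))))
        + (1 / ∑ i ∈ Finset.Icc 1 n, ζ i) *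
            ∏ i ∈ Finset.Icc 1 (n - 1), Complex.exp (-ζ i * ((t n - t i : ℝ) : ℂ)) := by
  have hmono : MonotoneOn t (Icc 1 n) := StrictMonoOn.monotoneOn fun i hi k hk => ht i hi k hk
  have h1 : 1 ∈ Icc 1 n := mem_Icc.mpr ⟨le_rfl, hn⟩
  have hn' : n ∈ Icc 1 n := mem_Icc.mpr ⟨hn, le_rfl⟩
  have hZ : 0 < (∑ i ∈ Icc 1 n, ζ i).re := by
    rw [Complex.re_sum]
    exact sum_pos hζ ⟨1, h1⟩
  set f : ℝ → ℂ := fun s => ∏ i ∈ Icc 1 n, cexp (-ζ i * ((|s - t i| : ℝ) : ℂ))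
  have hcont : Continuous f := by fun_prop
  have hleft : Set.EqOn f _ (Set.Iic (t 1)) := fun s hs =>
    prod_cexp_neg_mul_abs_of_forall_ge ζ t fun i hi =>
      le_trans hs (hmono h1 hi (mem_Icc.mp hi).1)
  have hright : Set.EqOn f _ (Set.Ioi (t n)) := fun s hs =>
    prod_cexp_neg_mul_abs_of_forall_le ζ t fun i hi =>
      (hmono hi hn' (mem_Icc.mp hi).2).trans hs.le
  rw [integral_eq_Iic_add_intervalIntegral_add_Ioi (hmono h1 hn' hn)
      (IntegrableOn.congr_fun ((integrableOn_Iic_cexp_neg_mul_sub hZ _).const_mul _) hleft.symm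
        measurableSet_Iic)
      (hcont.intervalIntegrable _ _)
      (IntegrableOn.congr_fun ((integrableOn_Ioi_cexp_neg_mul_sub hZ _).const_mul _) hright.symm
        measurableSet_Ioi),
    setIntegral_congr_fun measurableSet_Iic hleft, setIntegral_congr_fun measurableSet_Ioi hright,
    integral_const_mul, integral_const_mul, integral_Iic_cexp_neg_mul_sub hZ,
    integral_Ioi_cexp_neg_mul_sub hZ,
    ← intervalIntegral.sum_integral_adjacent_intervals_Ico hn fun _ _ =>
      hcont.intervalIntegrable _ _,
    show Icc 1 (n - 1) = Ico 1 n by ext; simp only [mem_Icc, mem_Ico]; omega,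
    sum_congr rfl fun j hj => intervalIntegral_prod_cexp_neg_mul_abs ζ t hmono hj]
  ring
end
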